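/- arXiv:2507.13592 — 2 statements merged into one kernel-verified Lean document; each statement's English description precedes it below -/
import Mathlib

section
/- Let G be a connected k-regular graph on n vertices with distinct adjacency eigenvalues λ_0 = k, λ_1, …, λ_r and eigenspaces E_0 = span{j}, E_1, …, E_r, and let U ⊆ V. Suppose I_U E_i ⊆ j^⊥ for every i ≥ 2, while I_U E_0 ⊄ j^⊥ and I_U E_1 ⊄ j^⊥ (i.e., the only main eigenvalues of 2D' − (a + b)J are μ_0 and μ_1). Then 2|U| ≠ n, and the main angles satisfy n β_0² = (n − 2|U|)²/n and n β_1² = n − (n − 2|U|)²/n. -/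
/-!
Since `I_U` is an orthogonal involution, the switched eigenspaces `I_U E_i` are pairwise
orthogonal and together span `ℝ^V`. The all-ones vector `j` is orthogonal to `I_U E_i` for
`i ≥ 2`, so it is the sum of its projections onto `I_U E_0` and `I_U E_1`, and Pythagoras gives
`n = ‖P_0 j‖² + ‖P_1 j‖²`. Finally `I_U E_0` is the line through `I_U j`, with
`⟪I_U j, j⟫ = n - 2|U|` and `‖I_U j‖² = n`, so `‖P_0 j‖² = (n - 2|U|)² / n`; that `μ_0` is main
says exactly that `n - 2|U| ≠ 0`.
-/

open Matrix

/-- The eigenspace of a real matrix `A` (acting by `mulVec`) for the value `μ`. -/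
noncomputable def eigSp {V : Type*} [Fintype V] [DecidableEq V]
    (A : Matrix V V ℝ) (μ : ℝ) : Submodule ℝ (V → ℝ) :=
  Module.End.eigenspace (Matrix.mulVecLin A) μ

/-- The switching matrix `I_U`: diagonal with entry `−1` on `U` and `+1` off `U`. -/
noncomputable def switchMat {V : Type*} [Fintype V] [DecidableEq V]
    (U : Finset V) : Matrix V V ℝ :=
  Matrix.diagonal (fun v => if v ∈ U then -1 else 1)

/-- The main angle of a subspace `W` of `ℝ^V`: `(1/√n)‖P j‖`, where `P` is the
orthogonal projection onto `W` and `j` is the all-ones vector. -/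
noncomputable def mainAngle {V : Type*} [Fintype V] [DecidableEq V]
    (W : Submodule ℝ (V → ℝ)) : ℝ :=
  (1 / Real.sqrt (Fintype.card V)) *
    ‖(Submodule.orthogonalProjection (W.map ((WithLp.linearEquiv 2 ℝ (V → ℝ)).symm.toLinearMap)))
      ((WithLp.linearEquiv 2 ℝ (V → ℝ)).symm (fun _ => 1))‖

namespace Submodule
variable {ι E : Type*} [NormedAddCommGroup E] [InnerProductSpace ℝ E]

theorem starProjection_add_starProjection_eq_self {W : ι → Submodule ℝ E}
    [∀ i, (W i).HasOrthogonalProjection] {s : Set ι}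
    (hW : s.Pairwise fun i j => W i ⟂ W j) (hsup : ⨆ i ∈ s, W i = ⊤)
    {a b : ι} (ha : a ∈ s) (hb : b ∈ s) (hab : a ≠ b) {x : E}
    (hx : ∀ i ∈ s, i ≠ a → i ≠ b → x ∈ (W i)ᗮ) :
    (W a).starProjection x + (W b).starProjection x = x := by
  have hP : ∀ {c}, c ∈ s → ∀ i ∈ s, i ≠ c → (W c).starProjection x ∈ (W i)ᗮ :=
    fun hc i hi hic => hW hc hi (Ne.symm hic) ((W _).starProjection_apply_mem x)
  have hy : ∀ i ∈ s, x - (W a).starProjection x - (W b).starProjection x ∈ (W i)ᗮ := by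
    intro i hi
    by_cases hia : i = a
    · subst hia
      exact sub_mem ((W i).sub_starProjection_mem_orthogonal x) (hP hb i hi hab)
    by_cases hib : i = b
    · subst hib
      rw [sub_right_comm]
      exact sub_mem ((W i).sub_starProjection_mem_orthogonal x) (hP ha i hi (Ne.symm hab))
    exact sub_mem (sub_mem (hx i hi hia hib) (hP ha i hi hia)) (hP hb i hi hib)
  have hy' : (⨆ i ∈ s, W i) ⟂ ℝ ∙ (x - (W a).starProjection x - (W b).starProjection x) :=
    isOrtho_iSup_left.2 fun i => isOrtho_iSup_left.2 fun hi =>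
      isOrtho_comm.2 ((span_singleton_le_iff_mem _ _).2 (hy i hi))
  rw [hsup, isOrtho_top_left, span_singleton_eq_bot, sub_sub, sub_eq_zero] at hy'
  exact hy'.symm

theorem norm_sq_starProjection_add_norm_sq_starProjection {W : ι → Submodule ℝ E}
    [∀ i, (W i).HasOrthogonalProjection] {s : Set ι}
    (hW : s.Pairwise fun i j => W i ⟂ W j) (hsup : ⨆ i ∈ s, W i = ⊤)
    {a b : ι} (ha : a ∈ s) (hb : b ∈ s) (hab : a ≠ b) {x : E}
    (hx : ∀ i ∈ s, i ≠ a → i ≠ b → x ∈ (W i)ᗮ) :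
    ‖(W a).starProjection x‖ ^ 2 + ‖(W b).starProjection x‖ ^ 2 = ‖x‖ ^ 2 := by
  conv_rhs => rw [← starProjection_add_starProjection_eq_self hW hsup ha hb hab hx]
  simp only [sq]
  exact (norm_add_sq_eq_norm_sq_add_norm_sq_real
    ((hW ha hb hab).inner_eq ((W a).starProjection_apply_mem x)
      ((W b).starProjection_apply_mem x))).symm

theorem norm_sq_starProjection_span_singleton (v w : E) :
    ‖(ℝ ∙ v).starProjection w‖ ^ 2 = inner ℝ v w ^ 2 / ‖v‖ ^ 2 := by
  rw [starProjection_singleton, norm_smul, mul_pow, Real.norm_eq_abs, sq_abs, div_pow]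
  by_cases hv : v = 0
  · simp [hv]
  · simp only [RCLike.ofReal_real_eq_id, id_eq]
    field_simp

end Submodule

theorem inner_toLp_toLp_eq_dotProduct {V : Type*} [Fintype V] (x y : V → ℝ) :
    inner ℝ (WithLp.toLp 2 x) (WithLp.toLp 2 y) = x ⬝ᵥ y := by
  simp [EuclideanSpace.inner_toLp_toLp, dotProduct_comm]

theorem norm_toLp_one_sq {V : Type*} [Fintype V] :
    ‖WithLp.toLp 2 (1 : V → ℝ)‖ ^ 2 = Fintype.card V := by
  rw [← real_inner_self_eq_norm_sq, inner_toLp_toLp_eq_dotProduct, dotProduct_one]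
  simp

section
variable {V : Type*} [Fintype V] [DecidableEq V]

theorem dotProduct_eq_zero_of_mem_eigSp {A : Matrix V V ℝ} (hA : A.IsSymm) {μ ν : ℝ}
    (hμν : μ ≠ ν) {v w : V → ℝ} (hv : v ∈ eigSp A μ) (hw : w ∈ eigSp A ν) : v ⬝ᵥ w = 0 := by
  rw [eigSp, Module.End.mem_eigenspace_iff, mulVecLin_apply] at hv hw
  have h : μ * (v ⬝ᵥ w) = ν * (v ⬝ᵥ w) := by
    rw [← smul_eq_mul, ← smul_dotProduct, ← hv, ← smul_eq_mul, ← dotProduct_smul, ← hw,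
      dotProduct_mulVec, ← mulVec_transpose, hA.eq]
  exact (mul_eq_mul_right_iff.1 h).resolve_left hμν

theorem switchMat_mulVec_apply (U : Finset V) (x : V → ℝ) (v : V) :
    (switchMat U *ᵥ x) v = (if v ∈ U then -1 else 1) * x v := by
  simp [switchMat, mulVec_diagonal]

theorem switchMat_mulVec_switchMat_mulVec (U : Finset V) (x : V → ℝ) :
    switchMat U *ᵥ (switchMat U *ᵥ x) = x := by
  ext v
  by_cases hv : v ∈ U <;> simp [switchMat_mulVec_apply, hv]

theorem switchMat_mulVec_dotProduct_switchMat_mulVec (U : Finset V) (x y : V → ℝ) :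
    (switchMat U *ᵥ x) ⬝ᵥ (switchMat U *ᵥ y) = x ⬝ᵥ y := by
  refine Finset.sum_congr rfl fun v _ => ?_
  by_cases hv : v ∈ U <;> simp [switchMat_mulVec_apply, hv]

theorem switchMat_mulVec_one_dotProduct_one (U : Finset V) :
    (switchMat U *ᵥ 1) ⬝ᵥ 1 = Fintype.card V - 2 * U.card := by
  simp only [dotProduct_one, switchMat_mulVec_apply, Pi.one_apply, mul_one]
  rw [Finset.sum_ite, Finset.sum_const, Finset.sum_const, Finset.filter_mem_eq_inter,
    Finset.univ_inter, Finset.filter_not, Finset.filter_mem_eq_inter, Finset.univ_inter,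
    ← Finset.compl_eq_univ_sdiff, Finset.card_compl, nsmul_eq_mul, nsmul_eq_mul,
    Nat.cast_sub U.card_le_univ]
  ring

theorem two_mul_card_ne_card_of_not_forall_mem_span_one (U : Finset V)
    (h : ¬ ∀ v ∈ ℝ ∙ (1 : V → ℝ), (switchMat U *ᵥ v) ⬝ᵥ 1 = 0) :
    2 * U.card ≠ Fintype.card V := by
  contrapose! h
  intro v hv
  obtain ⟨c, rfl⟩ := Submodule.mem_span_singleton.1 hv
  rw [mulVec_smul, smul_dotProduct, switchMat_mulVec_one_dotProduct_one]
  simp [← h]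

noncomputable def switchEuc (U : Finset V) : (V → ℝ) →ₗ[ℝ] EuclideanSpace ℝ V :=
  (WithLp.linearEquiv 2 ℝ (V → ℝ)).symm.toLinearMap ∘ₗ mulVecLin (switchMat U)

@[simp]
theorem switchEuc_apply (U : Finset V) (x : V → ℝ) :
    switchEuc U x = WithLp.toLp 2 (switchMat U *ᵥ x) := rfl

theorem switchEuc_surjective (U : Finset V) : Function.Surjective (switchEuc U) :=
  fun y => ⟨switchMat U *ᵥ WithLp.ofLp y, by
    simp only [switchEuc_apply, switchMat_mulVec_switchMat_mulVec, WithLp.toLp_ofLp]⟩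

theorem inner_switchEuc_switchEuc (U : Finset V) (x y : V → ℝ) :
    inner ℝ (switchEuc U x) (switchEuc U y) = x ⬝ᵥ y := by
  rw [switchEuc_apply, switchEuc_apply, inner_toLp_toLp_eq_dotProduct,
    switchMat_mulVec_dotProduct_switchMat_mulVec]

theorem isOrtho_map_switchEuc_eigSp {A : Matrix V V ℝ} (hA : A.IsSymm) (U : Finset V)
    {μ ν : ℝ} (hμν : μ ≠ ν) :
    (eigSp A μ).map (switchEuc U) ⟂ (eigSp A ν).map (switchEuc U) := by
  rw [Submodule.isOrtho_iff_inner_eq]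
  rintro _ ⟨v, hv, rfl⟩ _ ⟨w, hw, rfl⟩
  rw [inner_switchEuc_switchEuc]
  exact dotProduct_eq_zero_of_mem_eigSp hA hμν hv hw

theorem card_mul_mainAngle_map_switchMat_sq [Nonempty V] (U : Finset V)
    (W : Submodule ℝ (V → ℝ)) :
    Fintype.card V * mainAngle (W.map (mulVecLin (switchMat U))) ^ 2 =
      ‖(W.map (switchEuc U)).starProjection (WithLp.toLp 2 1)‖ ^ 2 := by
  have hn : (0 : ℝ) < Fintype.card V := by exact_mod_cast Fintype.card_pos
  have hmap : (W.map (mulVecLin (switchMat U))).map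
      (WithLp.linearEquiv 2 ℝ (V → ℝ)).symm.toLinearMap = W.map (switchEuc U) :=
    (Submodule.map_comp _ _ _).symm
  simp only [mainAngle, mul_pow, div_pow, one_pow, Real.sq_sqrt hn.le]
  field_simp
  -- `hmap` cannot be rewritten under `orthogonalProjection`, whose codomain depends on the
  -- subspace; under `starProjection` it can.
  change ‖(Submodule.map (WithLp.linearEquiv 2 ℝ (V → ℝ)).symm.toLinearMap
    (Submodule.map (mulVecLin (switchMat U)) W)).starProjection _‖ ^ 2 = _
  simp only [hmap]
  rfl

theorem norm_sq_starProjection_map_switchEuc_span_one (U : Finset V) :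
    ‖((ℝ ∙ (1 : V → ℝ)).map (switchEuc U)).starProjection (WithLp.toLp 2 1)‖ ^ 2 =
      ((Fintype.card V : ℝ) - 2 * U.card) ^ 2 / Fintype.card V := by
  simp only [Submodule.map_span, Set.image_singleton]
  rw [Submodule.norm_sq_starProjection_span_singleton, ← real_inner_self_eq_norm_sq,
    inner_switchEuc_switchEuc, switchEuc_apply, inner_toLp_toLp_eq_dotProduct,
    switchMat_mulVec_one_dotProduct_one, dotProduct_one]
  simp

end

theorem stmt6_general {V : Type*} [Fintype V] [DecidableEq V]
    (G : SimpleGraph V) [DecidableRel G.Adj]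
    (r : ℕ) (hr : 1 ≤ r) (lam : ℕ → ℝ)
    (hinj : Set.InjOn lam (Set.Iic r))
    (hsup : (⨆ i ∈ Finset.range (r + 1), eigSp (G.adjMatrix ℝ) (lam i)) = ⊤)
    (A : Matrix V V ℝ) (hA : A = G.adjMatrix ℝ)
    (hE0 : eigSp A (lam 0) = Submodule.span ℝ {(fun _ => 1 : V → ℝ)})
    (U : Finset V)
    (h2 : ∀ i, 2 ≤ i → i ≤ r → ∀ v ∈ eigSp A (lam i),
      ((switchMat U).mulVec v) ⬝ᵥ (fun _ => (1 : ℝ)) = 0)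
    (h0 : ¬ (∀ v ∈ eigSp A (lam 0),
      ((switchMat U).mulVec v) ⬝ᵥ (fun _ => (1 : ℝ)) = 0)) :
    2 * U.card ≠ Fintype.card V ∧
    (Fintype.card V : ℝ) *
        (mainAngle (Submodule.map (Matrix.mulVecLin (switchMat U)) (eigSp A (lam 0)))) ^ 2 =
      ((Fintype.card V : ℝ) - 2 * U.card) ^ 2 / (Fintype.card V : ℝ) ∧
    (Fintype.card V : ℝ) *
        (mainAngle (Submodule.map (Matrix.mulVecLin (switchMat U)) (eigSp A (lam 1)))) ^ 2 =
      (Fintype.card V : ℝ) - ((Fintype.card V : ℝ) - 2 * U.card) ^ 2 / (Fintype.card V : ℝ) := by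
  subst hA
  set W : ℕ → Submodule ℝ (EuclideanSpace ℝ V) :=
    fun i => (eigSp (G.adjMatrix ℝ) (lam i)).map (switchEuc U)
  have hcard : 2 * U.card ≠ Fintype.card V :=
    two_mul_card_ne_card_of_not_forall_mem_span_one U (by rwa [hE0] at h0)
  have : Nonempty V := Fintype.card_pos_iff.1 (by have := U.card_le_univ; omega)
  have hortho : (↑(Finset.range (r + 1)) : Set ℕ).Pairwise fun i j => W i ⟂ W j :=
    fun i hi j hj hij => isOrtho_map_switchEuc_eigSp G.isSymm_adjMatrix U
      (hinj.ne (Finset.mem_range_succ_iff.1 hi) (Finset.mem_range_succ_iff.1 hj) hij)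
  have hspan : ⨆ i ∈ (↑(Finset.range (r + 1)) : Set ℕ), W i = ⊤ := by
    simp only [W, Finset.mem_coe, ← Submodule.map_iSup, hsup, Submodule.map_top,
      LinearMap.range_eq_top.2 (switchEuc_surjective U)]
  have hj : ∀ i ∈ (↑(Finset.range (r + 1)) : Set ℕ), i ≠ 0 → i ≠ 1 →
      WithLp.toLp 2 1 ∈ (W i)ᗮ := by
    rintro i hi hi0 hi1 _ ⟨v, hv, rfl⟩
    rw [switchEuc_apply, inner_toLp_toLp_eq_dotProduct]
    exact h2 i (by omega) (Finset.mem_range_succ_iff.1 hi) v hv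
  have hpyth := Submodule.norm_sq_starProjection_add_norm_sq_starProjection hortho hspan
    (Finset.mem_range.2 (by omega)) (Finset.mem_range.2 (by omega)) zero_ne_one hj
  have hproj0 : ‖(W 0).starProjection (WithLp.toLp 2 1)‖ ^ 2 =
      ((Fintype.card V : ℝ) - 2 * U.card) ^ 2 / Fintype.card V := by
    simp only [W, hE0]
    exact norm_sq_starProjection_map_switchEuc_span_one U
  refine ⟨hcard, ?_, ?_⟩
  · rw [card_mul_mainAngle_map_switchMat_sq, hproj0]
  · rw [card_mul_mainAngle_map_switchMat_sq, ← hproj0, ← norm_toLp_one_sq, ← hpyth]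
    ring

/-- let `G` be a connected `k`-regular graph on `n` vertices with distinct
adjacency eigenvalues `λ_0 = k, λ_1, …, λ_r` and eigenspaces `E_0 = span{j}, E_1, …, E_r`
and `U ⊆ V`.  If `I_U E_i ⊆ j^⊥` for all `i ≥ 2` while `I_U E_0 ⊄ j^⊥` and
`I_U E_1 ⊄ j^⊥` (only `μ_0, μ_1` are main), then `2|U| ≠ n` and the main angles satisfy
`n β_0² = (n − 2|U|)²/n` and `n β_1² = n − (n − 2|U|)²/n`. -/
theorem stmt6 {V : Type*} [Fintype V] [DecidableEq V]
    (G : SimpleGraph V) [DecidableRel G.Adj] (k : ℕ)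
    (hreg : G.IsRegularOfDegree k) (hconn : G.Connected)
    (r : ℕ) (hr : 1 ≤ r) (lam : ℕ → ℝ) (hk : lam 0 = k)
    (hinj : Set.InjOn lam (Set.Iic r))
    (hne : ∀ i ≤ r, eigSp (G.adjMatrix ℝ) (lam i) ≠ ⊥)
    (hsup : (⨆ i ∈ Finset.range (r + 1), eigSp (G.adjMatrix ℝ) (lam i)) = ⊤)
    (A : Matrix V V ℝ) (hA : A = G.adjMatrix ℝ)
    (hE0 : eigSp A (lam 0) = Submodule.span ℝ {(fun _ => 1 : V → ℝ)})
    (U : Finset V)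
    (h2 : ∀ i, 2 ≤ i → i ≤ r → ∀ v ∈ eigSp A (lam i),
      ((switchMat U).mulVec v) ⬝ᵥ (fun _ => (1 : ℝ)) = 0)
    (h0 : ¬ (∀ v ∈ eigSp A (lam 0),
      ((switchMat U).mulVec v) ⬝ᵥ (fun _ => (1 : ℝ)) = 0))
    (h1 : ¬ (∀ v ∈ eigSp A (lam 1),
      ((switchMat U).mulVec v) ⬝ᵥ (fun _ => (1 : ℝ)) = 0)) :
    2 * U.card ≠ Fintype.card V ∧
    (Fintype.card V : ℝ) *
        (mainAngle (Submodule.map (Matrix.mulVecLin (switchMat U)) (eigSp A (lam 0)))) ^ 2 =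
      ((Fintype.card V : ℝ) - 2 * U.card) ^ 2 / (Fintype.card V : ℝ) ∧
    (Fintype.card V : ℝ) *
        (mainAngle (Submodule.map (Matrix.mulVecLin (switchMat U)) (eigSp A (lam 1)))) ^ 2 =
      (Fintype.card V : ℝ) - ((Fintype.card V : ℝ) - 2 * U.card) ^ 2 / (Fintype.card V : ℝ) :=
  stmt6_general G r hr lam hinj hsup A hA hE0 U h2 h0
end

section
/- Let G be a k-regular graph on n vertices with connected components V_1, …, V_t, distinct adjacency eigenvalues λ_0 = k, λ_1, …, λ_r and eigenspaces E_0, …, E_r. Let U ⊆ V with U ≠ ∅ and U ≠ V be such that {U, V∖U} is an equitable partition: there are integers b_{11}, b_{12}, b_{21}, b_{22} such that every vertex of U has exactly b_{11} neighbors in U and b_{12} neighbors in V∖U, and every vertex of V∖U has exactly b_{21} neighbors in U and b_{22} neighbors in V∖U. Assume the eigenvalues of the quotient matrix B = (b_{st}) are exactly k and λ_1. If 2|U ∩ V_i| ≠ |V_i| for some i ∈ {1, …, t}, then I_U E_0 ⊄ j^⊥, I_U E_1 ⊄ j^⊥, and I_U E_s ⊆ j^⊥ for every s ≥ 2; that is,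 the main eigenvalues of 2D' − (a + b)J are exactly μ_0 and μ_1. -/
open Matrix

lemma mem_eigSp' {V : Type*} [Fintype V] [DecidableEq V]
    {A : Matrix V V ℝ} {μ : ℝ} {v : V → ℝ} :
    v ∈ eigSp A μ ↔ A.mulVec v = μ • v := by
  simp [eigSp, Module.End.mem_eigenspace_iff]

lemma switch_dot {V : Type*} [Fintype V] [DecidableEq V]
    (U : Finset V) (x : V → ℝ) :
    ((switchMat U).mulVec x) ⬝ᵥ (fun _ => (1 : ℝ))
      = (∑ v, x v) - 2 * ∑ v ∈ U, x v := by
  classical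
  have : ∀ v : V, ((switchMat U).mulVec x) v * 1
      = x v - 2 * (if v ∈ U then x v else 0) := by
    intro v
    simp only [switchMat, Matrix.mulVec_diagonal]
    by_cases h : v ∈ U <;> simp [h] <;> ring
  simp only [dotProduct, this, Finset.sum_sub_distrib, ← Finset.mul_sum,
    Finset.sum_ite_mem, Finset.univ_inter]

lemma ortho {V : Type*} [Fintype V] [DecidableEq V]
    (G : SimpleGraph V) [DecidableRel G.Adj] {μ ν : ℝ} {x y : V → ℝ}
    (hμν : μ ≠ ν) (hx : (G.adjMatrix ℝ).mulVec x = μ • x)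
    (hy : (G.adjMatrix ℝ).mulVec y = ν • y) : x ⬝ᵥ y = 0 := by
  have hsymm : x ᵥ* (G.adjMatrix ℝ) = (G.adjMatrix ℝ) *ᵥ x := by
    ext v; simp
  have h1 : μ * (x ⬝ᵥ y) = ν * (x ⬝ᵥ y) := by
    calc μ * (x ⬝ᵥ y) = (μ • x) ⬝ᵥ y := by rw [smul_dotProduct]; rfl
    _ = ((G.adjMatrix ℝ) *ᵥ x) ⬝ᵥ y := by rw [hx]
    _ = (x ᵥ* (G.adjMatrix ℝ)) ⬝ᵥ y := by rw [hsymm]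
    _ = x ⬝ᵥ ((G.adjMatrix ℝ) *ᵥ y) := (dotProduct_mulVec x _ y).symm
    _ = x ⬝ᵥ (ν • y) := by rw [hy]
    _ = ν * (x ⬝ᵥ y) := by rw [dotProduct_smul]; rfl
  have := sub_eq_zero.mpr h1
  rw [← sub_mul] at this
  rcases mul_eq_zero.mp this with h | h
  · exact absurd (sub_eq_zero.mp h) hμν
  · exact h

/-- let `G` be `k`-regular on `n` vertices with components `V_1, …, V_t`,
distinct adjacency eigenvalues `λ_0 = k, λ_1, …, λ_r` and eigenspaces `E_0, …, E_r`.
Let `∅ ≠ U ≠ V` induce an equitable partition `{U, V∖U}` whose quotient matrix `B` has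
eigenvalues exactly `k` and `λ_1`.  If `2|U ∩ V_i| ≠ |V_i|` for some component,
then `I_U E_0 ⊄ j^⊥`, `I_U E_1 ⊄ j^⊥`, and `I_U E_s ⊆ j^⊥` for every `s ≥ 2`;
i.e. the main eigenvalues of `2D' − (a+b)J` are exactly `μ_0` and `μ_1`. -/
theorem stmt7 {V : Type*} [Fintype V] [DecidableEq V]
    (G : SimpleGraph V) [DecidableRel G.Adj] (k : ℕ)
    (hreg : G.IsRegularOfDegree k)
    (r : ℕ) (hr : 1 ≤ r) (lam : ℕ → ℝ) (hk : lam 0 = k)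
    (hinj : Set.InjOn lam (Set.Iic r))
    (hne : ∀ i ≤ r, eigSp (G.adjMatrix ℝ) (lam i) ≠ ⊥)
    (hsup : (⨆ i ∈ Finset.range (r + 1), eigSp (G.adjMatrix ℝ) (lam i)) = ⊤)
    (A : Matrix V V ℝ) (hA : A = G.adjMatrix ℝ)
    (U : Finset V) (hU1 : U ≠ ∅) (hU2 : U ≠ Finset.univ)
    (b11 b12 b21 b22 : ℕ)
    (hequit1 : ∀ v ∈ U, (U.filter (G.Adj v)).card = b11 ∧
      ((Uᶜ).filter (G.Adj v)).card = b12)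
    (hequit2 : ∀ v ∉ U, (U.filter (G.Adj v)).card = b21 ∧
      ((Uᶜ).filter (G.Adj v)).card = b22)
    (hB : spectrum ℝ (!![(b11 : ℝ), (b12 : ℝ); (b21 : ℝ), (b22 : ℝ)]) =
      {(k : ℝ), lam 1})
    (hcomp : ∃ c : G.ConnectedComponent,
      2 * Nat.card {v : V // v ∈ U ∧ v ∈ c.supp} ≠ Nat.card c.supp) :
    ¬ (∀ v ∈ eigSp A (lam 0),
        ((switchMat U).mulVec v) ⬝ᵥ (fun _ => (1 : ℝ)) = 0) ∧
    ¬ (∀ v ∈ eigSp A (lam 1),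
        ((switchMat U).mulVec v) ⬝ᵥ (fun _ => (1 : ℝ)) = 0) ∧
    (∀ s, 2 ≤ s → s ≤ r → ∀ v ∈ eigSp A (lam s),
        ((switchMat U).mulVec v) ⬝ᵥ (fun _ => (1 : ℝ)) = 0) := by
  classical
  subst hA
  -- nonemptiness
  obtain ⟨v0, hv0⟩ : ∃ v, v ∈ U := (Finset.nonempty_iff_ne_empty.mpr hU1)
  have hUc_ne : (Uᶜ : Finset V).Nonempty := by
    rw [Finset.nonempty_iff_ne_empty]
    intro h
    exact hU2 ((Finset.compl_eq_empty_iff U).mp h)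
  obtain ⟨w0, hw0⟩ := hUc_ne
  have hw0' : w0 ∉ U := Finset.mem_compl.mp hw0
  -- row sums of the quotient matrix
  have hsplit : ∀ v : V, (U.filter (G.Adj v)).card + ((Uᶜ).filter (G.Adj v)).card = k := by
    intro v
    have hd : (Finset.univ.filter (G.Adj v)).card = k := by
      rw [← SimpleGraph.neighborFinset_eq_filter, SimpleGraph.card_neighborFinset_eq_degree]
      exact hreg v
    rw [← hd, ← Finset.card_union_of_disjoint
      (Finset.disjoint_filter_filter disjoint_compl_right),
      ← Finset.filter_union, Finset.union_compl]
  have hk1 : b11 + b12 = k := by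
    have := hsplit v0
    rw [(hequit1 v0 hv0).1, (hequit1 v0 hv0).2] at this
    exact this
  have hk2 : b21 + b22 = k := by
    have := hsplit w0
    rw [(hequit2 w0 hw0').1, (hequit2 w0 hw0').2] at this
    exact this
  -- edge double counting
  have hcount : U.card * b12 = (Uᶜ : Finset V).card * b21 := by
    have h1 : ∑ v ∈ U, ((Uᶜ).filter (G.Adj v)).card = U.card * b12 := by
      rw [Finset.sum_congr rfl (fun v hv => (hequit1 v hv).2), Finset.sum_const,
        smul_eq_mul]
    have h2 : ∑ u ∈ (Uᶜ : Finset V), (U.filter (G.Adj u)).card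
        = (Uᶜ : Finset V).card * b21 := by
      rw [Finset.sum_congr rfl (fun u hu => (hequit2 u (Finset.mem_compl.mp hu)).1),
        Finset.sum_const, smul_eq_mul]
    rw [← h1, ← h2]
    simp only [Finset.card_filter]
    rw [Finset.sum_comm]
    refine Finset.sum_congr rfl fun u hu => Finset.sum_congr rfl fun v hv => ?_
    simp [G.adj_comm]
  -- distinctness of eigenvalues
  have h0r : (0 : ℕ) ∈ Set.Iic r := Set.mem_Iic.mpr (Nat.zero_le r)
  have h1r : (1 : ℕ) ∈ Set.Iic r := Set.mem_Iic.mpr hr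
  have hlam1k : lam 1 ≠ (k : ℝ) := by
    rw [← hk]
    intro h
    exact one_ne_zero (hinj h1r h0r h)
  -- eigenvector of the quotient matrix for lam 1
  have hmem : lam 1 ∈ spectrum ℝ (!![(b11 : ℝ), (b12 : ℝ); (b21 : ℝ), (b22 : ℝ)]) := by
    rw [hB]; exact Set.mem_insert_iff.mpr (Or.inr rfl)
  have hmem' : lam 1 ∈ spectrum ℝ
      (Matrix.toLinAlgEquiv' (!![(b11 : ℝ), (b12 : ℝ); (b21 : ℝ), (b22 : ℝ)])) := by
    rwa [AlgEquiv.spectrum_eq]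
  obtain ⟨p, hp⟩ := (Module.End.hasEigenvalue_iff_mem_spectrum.mpr hmem').exists_hasEigenvector
  have hpB : (!![(b11 : ℝ), (b12 : ℝ); (b21 : ℝ), (b22 : ℝ)]) *ᵥ p = lam 1 • p := by
    have := hp.apply_eq_smul
    rwa [Matrix.toLinAlgEquiv'_apply] at this
  have hpne : p ≠ 0 := hp.right
  set α := p 0 with hα
  set β := p 1 with hβ
  have e1 : (b11 : ℝ) * α + b12 * β = lam 1 * α := by
    have := congrFun hpB 0
    simpa [Matrix.mulVec, dotProduct, Fin.sum_univ_two] using this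
  have e2 : (b21 : ℝ) * α + b22 * β = lam 1 * β := by
    have := congrFun hpB 1
    simpa [Matrix.mulVec, dotProduct, Fin.sum_univ_two] using this
  have hpzero : ¬(α = 0 ∧ β = 0) := by
    rintro ⟨ha, hb⟩
    apply hpne
    funext i
    fin_cases i
    · exact ha
    · exact hb
  -- the two step vector
  set x1 : V → ℝ := fun v => if v ∈ U then α else β with hx1def
  have hx1 : (G.adjMatrix ℝ) *ᵥ x1 = lam 1 • x1 := by
    funext v
    rw [SimpleGraph.adjMatrix_mulVec_apply]
    have c1 : ((Finset.univ.filter (G.Adj v)).filter (fun u => u ∈ U))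
        = U.filter (G.Adj v) := by
      ext u; simp [and_comm]
    have c2 : ((Finset.univ.filter (G.Adj v)).filter (fun u => ¬ u ∈ U))
        = (Uᶜ).filter (G.Adj v) := by
      ext u; simp [and_comm]
    have hsum : ∑ u ∈ G.neighborFinset v, x1 u
        = ((U.filter (G.Adj v)).card : ℝ) * α + (((Uᶜ).filter (G.Adj v)).card : ℝ) * β := by
      rw [SimpleGraph.neighborFinset_eq_filter, hx1def]
      rw [Finset.sum_ite, Finset.sum_const, Finset.sum_const, c1, c2]
      simp [nsmul_eq_mul]
    rw [hsum]
    by_cases hv : v ∈ U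
    · rw [(hequit1 v hv).1, (hequit1 v hv).2]
      simp only [Pi.smul_apply, hx1def, if_pos hv, smul_eq_mul]
      linarith [e1]
    · rw [(hequit2 v hv).1, (hequit2 v hv).2]
      simp only [Pi.smul_apply, hx1def, if_neg hv, smul_eq_mul]
      linarith [e2]
  -- the all ones vector
  have hj : (G.adjMatrix ℝ) *ᵥ (fun _ => (1 : ℝ)) = lam 0 • (fun _ => (1 : ℝ)) := by
    funext v
    have := SimpleGraph.adjMatrix_mulVec_const_apply_of_regular (α := ℝ) (a := (1 : ℝ))
      hreg (v := v)
    simpa [hk, Function.const] using this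
  -- real casts
  set u : ℝ := (U.card : ℝ) with hu
  set w : ℝ := ((Uᶜ : Finset V).card : ℝ) with hw
  have hupos : 0 < u := by
    rw [hu]; exact_mod_cast Finset.card_pos.mpr ⟨v0, hv0⟩
  have hwpos : 0 < w := by
    rw [hw]; exact_mod_cast Finset.card_pos.mpr ⟨w0, hw0⟩
  have ec : u * b12 = w * b21 := by
    rw [hu, hw]; exact_mod_cast hcount
  have hk1' : (b11 : ℝ) + b12 = k := by exact_mod_cast hk1
  have hk2' : (b21 : ℝ) + b22 = k := by exact_mod_cast hk2
  -- the key nonvanishing for part 2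
  have hmain2 : β * w - α * u ≠ 0 := by
    intro h0
    have hcontra : β * w = α * u := by linarith
    have hane : α ≠ 0 := by
      intro ha
      apply hpzero
      refine ⟨ha, ?_⟩
      have : β * w = 0 := by rw [hcontra, ha]; ring
      rcases mul_eq_zero.mp this with h | h
      · exact h
      · exact absurd h (ne_of_gt hwpos)
    have hbne : β ≠ 0 := by
      intro hb
      apply hpzero
      refine ⟨?_, hb⟩
      have : α * u = 0 := by rw [← hcontra, hb]; ring
      rcases mul_eq_zero.mp this with h | h
      · exact h
      · exact absurd h (ne_of_gt hupos)
    have key1 : lam 1 * (β * w) = ((b11 : ℝ) + b21) * (β * w) := by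
      linear_combination (-u) * e1 + β * ec + (lam 1 - (b11 : ℝ)) * hcontra
    have key2 : lam 1 * (α * u) = ((b12 : ℝ) + b22) * (α * u) := by
      linear_combination (-w) * e2 + (-α) * ec + ((b22 : ℝ) - lam 1) * hcontra
    have hbw : β * w ≠ 0 := mul_ne_zero hbne (ne_of_gt hwpos)
    have hau : α * u ≠ 0 := mul_ne_zero hane (ne_of_gt hupos)
    have k1 : lam 1 = (b11 : ℝ) + b21 := mul_right_cancel₀ hbw key1
    have k2 : lam 1 = (b12 : ℝ) + b22 := mul_right_cancel₀ hau key2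
    apply hlam1k
    linarith
  have hab : α ≠ β := by
    intro h
    have e1' : (b11 : ℝ) * α + b12 * α = lam 1 * α := by rw [h] at e1 ⊢; exact e1
    have h3 : ((k : ℝ) - lam 1) * α = 0 := by linear_combination e1' - α * hk1'
    rcases mul_eq_zero.mp h3 with h4 | h4
    · exact hlam1k (by linarith)
    · exact hpzero ⟨h4, h ▸ h4⟩
  -- sums of x1
  have hsx1U : ∑ v ∈ U, x1 v = α * u := by
    rw [Finset.sum_congr rfl (fun v hv => if_pos hv), Finset.sum_const, nsmul_eq_mul, hu]
    ring
  have hsx1Uc : ∑ v ∈ (Uᶜ : Finset V), x1 v = β * w := by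
    rw [Finset.sum_congr rfl (fun v hv => if_neg (Finset.mem_compl.mp hv)),
      Finset.sum_const, nsmul_eq_mul, hw]
    ring
  have hsx1 : ∑ v, x1 v = α * u + β * w := by
    rw [← Finset.sum_add_sum_compl U x1, hsx1U, hsx1Uc]
  refine ⟨?_, ?_, ?_⟩
  · -- part 1
    intro hall
    obtain ⟨c, hc⟩ := hcomp
    set χ : V → ℝ := fun v => if G.connectedComponentMk v = c then 1 else 0 with hχdef
    have hχ : (G.adjMatrix ℝ) *ᵥ χ = lam 0 • χ := by
      funext v
      rw [SimpleGraph.adjMatrix_mulVec_apply]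
      by_cases hvc : G.connectedComponentMk v = c
      · have hall1 : ∀ x ∈ G.neighborFinset v, χ x = 1 := by
          intro x hx
          rw [SimpleGraph.mem_neighborFinset] at hx
          have hxc : G.connectedComponentMk x = c := by
            rw [← hvc]
            exact SimpleGraph.ConnectedComponent.connectedComponentMk_eq_of_adj hx.symm
          simp [hχdef, hxc]
        rw [Finset.sum_congr rfl hall1, Finset.sum_const, nsmul_eq_mul, mul_one,
          SimpleGraph.card_neighborFinset_eq_degree, hreg v]
        simp [hχdef, hvc, hk]
      · have hall0 : ∀ x ∈ G.neighborFinset v, χ x = 0 := by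
          intro x hx
          rw [SimpleGraph.mem_neighborFinset] at hx
          have hxc : ¬ G.connectedComponentMk x = c := by
            intro hxc
            apply hvc
            rw [← hxc]
            exact SimpleGraph.ConnectedComponent.connectedComponentMk_eq_of_adj hx
          simp [hχdef, hxc]
        rw [Finset.sum_congr rfl hall0, Finset.sum_const, smul_zero]
        simp [hχdef, hvc]
    have hzero := hall χ (mem_eigSp'.mpr hχ)
    rw [switch_dot] at hzero
    have hN : ∑ v, χ v
        = ((Finset.univ.filter (fun v => G.connectedComponentMk v = c)).card : ℝ) := by
      rw [hχdef, Finset.sum_boole]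
    have hM : ∑ v ∈ U, χ v
        = ((Finset.univ.filter (fun v => v ∈ U ∧ G.connectedComponentMk v = c)).card : ℝ) := by
      rw [hχdef, Finset.sum_boole]
      congr 1
      congr 1
      ext v
      simp
    rw [hN, hM] at hzero
    have hc1 : Nat.card {v : V // v ∈ U ∧ v ∈ c.supp}
        = (Finset.univ.filter (fun v => v ∈ U ∧ G.connectedComponentMk v = c)).card := by
      rw [Nat.card_eq_fintype_card, Fintype.card_subtype]
      congr 1
      ext v
      simp [SimpleGraph.ConnectedComponent.mem_supp_iff]
    have hc2 : Nat.card c.supp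
        = (Finset.univ.filter (fun v => G.connectedComponentMk v = c)).card := by
      rw [Nat.card_eq_fintype_card, Fintype.card_subtype]
      congr 1
      ext v
      simp [SimpleGraph.ConnectedComponent.mem_supp_iff]
    apply hc
    rw [hc1, hc2]
    have : (2 : ℝ) * ((Finset.univ.filter
          (fun v => v ∈ U ∧ G.connectedComponentMk v = c)).card : ℝ)
        = ((Finset.univ.filter (fun v => G.connectedComponentMk v = c)).card : ℝ) := by
      linarith
    exact_mod_cast this
  · -- part 2
    intro hall
    have hzero := hall x1 (mem_eigSp'.mpr hx1)
    rw [switch_dot, hsx1, hsx1U] at hzero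
    apply hmain2
    linarith
  · -- part 3
    intro s hs2 hsr v hv
    have hv' : (G.adjMatrix ℝ) *ᵥ v = lam s • v := mem_eigSp'.mp hv
    have hsr' : (s : ℕ) ∈ Set.Iic r := Set.mem_Iic.mpr hsr
    have h0s : lam 0 ≠ lam s := by
      intro h
      have := hinj h0r hsr' h
      omega
    have h1s : lam 1 ≠ lam s := by
      intro h
      have := hinj h1r hsr' h
      omega
    have hjv : (fun _ => (1 : ℝ)) ⬝ᵥ v = 0 := ortho G h0s hj hv'
    have hx1v : x1 ⬝ᵥ v = 0 := ortho G h1s hx1 hv'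
    set S1 := ∑ z ∈ U, v z with hS1
    set S2 := ∑ z ∈ (Uᶜ : Finset V), v z with hS2
    have hjv' : S1 + S2 = 0 := by
      have h0 : (fun _ => (1 : ℝ)) ⬝ᵥ v = S1 + S2 := by
        simp only [dotProduct, one_mul]
        exact (Finset.sum_add_sum_compl U v).symm
      rw [h0] at hjv
      exact hjv
    have hx1v' : α * S1 + β * S2 = 0 := by
      have h1 : ∑ z ∈ U, x1 z * v z = α * S1 := by
        rw [hS1, Finset.mul_sum]
        exact Finset.sum_congr rfl (fun z hz => by simp [hx1def, if_pos hz])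
      have h2 : ∑ z ∈ (Uᶜ : Finset V), x1 z * v z = β * S2 := by
        rw [hS2, Finset.mul_sum]
        exact Finset.sum_congr rfl
          (fun z hz => by simp [hx1def, if_neg (Finset.mem_compl.mp hz)])
      have h0 : x1 ⬝ᵥ v = α * S1 + β * S2 := by
        simp only [dotProduct]
        rw [← Finset.sum_add_sum_compl U (fun z => x1 z * v z), h1, h2]
      rw [h0] at hx1v
      exact hx1v
    have hS1_0 : S1 = 0 := by
      have h5 : (α - β) * S1 = 0 := by linear_combination hx1v' - β * hjv'
      rcases mul_eq_zero.mp h5 with h6 | h6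
      · exact absurd (by linarith : α = β) hab
      · exact h6
    rw [switch_dot]
    have : ∑ z, v z = S1 + S2 := (Finset.sum_add_sum_compl U v).symm
    rw [this, ← hS1]
    linarith
end
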